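/- arXiv:1505.07905 — 5 statements merged into one kernel-verified Lean document; each statement's English description precedes it below -/
import Mathlib

section
/- If J is an invertible guaranteed scoring game (there exists J' with J + J' ∼ 0), then G + J ≽ H + J if and only if G ≽ H. -/
/-- A scoring game: `la`/`ra` are the atom values (relevant when the
corresponding option list is empty), `L`/`R` the Left and Right options. -/
inductive SG : Type
  | mk (la ra : ℝ) (L R : List SG) : SG

namespace SG

theorem sizeOf_lt_of_mem {g : SG} {l : List SG} (h : g ∈ l) : sizeOf g < sizeOf l :=
  List.sizeOf_lt_of_mem h

noncomputable instance : DecidableEq SG := Classical.decEq _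

def la : SG → ℝ | mk a _ _ _ => a
def ra : SG → ℝ | mk _ b _ _ => b
def L : SG → List SG | mk _ _ l _ => l
def R : SG → List SG | mk _ _ _ r => r

/-- The list of atom values occurring in atomic followers of a game. -/
def atomList : SG → List ℝ
  | mk a b ls rs =>
    (if ls.isEmpty then [a] else (ls.attach.map (fun x => atomList x.1)).flatten)
    ++ (if rs.isEmpty then [b] else (rs.attach.map (fun x => atomList x.1)).flatten)
decreasing_by all_goals (simp only [SG.mk.sizeOf_spec]; (first | (have := sizeOf_lt_of_mem x.2) | (have := sizeOf_lt_of_mem (by assumption : x ∈ _))); omega)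

/-- The guaranteed condition. -/
def Guaranteed : SG → Prop
  | mk a b ls rs =>
    (∀ x ∈ ls, Guaranteed x) ∧ (∀ x ∈ rs, Guaranteed x) ∧
    (ls = [] → ∀ s ∈ (mk a b ls rs).atomList, a ≤ s) ∧
    (rs = [] → ∀ s ∈ (mk a b ls rs).atomList, s ≤ b)
decreasing_by all_goals (simp only [SG.mk.sizeOf_spec]; (first | (have := sizeOf_lt_of_mem x.2) | (have := sizeOf_lt_of_mem (by assumption : x ∈ _))); omega)

/-- Disjunctive sum. -/
noncomputable def add : SG → SG → SG
  | mk a1 b1 L1 R1, mk a2 b2 L2 R2 =>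
    mk (a1 + a2) (b1 + b2)
      (L1.attach.map (fun x => add x.1 (mk a2 b2 L2 R2))
        ++ L2.attach.map (fun x => add (mk a1 b1 L1 R1) x.1))
      (R1.attach.map (fun x => add x.1 (mk a2 b2 L2 R2))
        ++ R2.attach.map (fun x => add (mk a1 b1 L1 R1) x.1))
termination_by g h => sizeOf g + sizeOf h
decreasing_by all_goals (simp only [SG.mk.sizeOf_spec]; (first | (have := sizeOf_lt_of_mem x.2) | (have := sizeOf_lt_of_mem (by assumption : x ∈ _))); omega)

/-- Left- and Right-stops (as a pair). -/
noncomputable def stops : SG → ℝ × ℝ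
  | mk a b ls rs =>
    (if ls.isEmpty then a else ((ls.attach.map (fun x => (stops x.1).2)).maximum.unbotD 0),
     if rs.isEmpty then b else ((rs.attach.map (fun x => (stops x.1).1)).minimum.untopD 0))
decreasing_by all_goals (simp only [SG.mk.sizeOf_spec]; (first | (have := sizeOf_lt_of_mem x.2) | (have := sizeOf_lt_of_mem (by assumption : x ∈ _))); omega)

noncomputable def Ls (g : SG) : ℝ := g.stops.1
noncomputable def Rs (g : SG) : ℝ := g.stops.2

/-- The conjugate: interchange Left and Right and negate atoms. -/
noncomputable def conj : SG → SG
  | mk a b ls rs =>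
    mk (-b) (-a) (rs.attach.map (fun x => conj x.1)) (ls.attach.map (fun x => conj x.1))
decreasing_by all_goals (simp only [SG.mk.sizeOf_spec]; (first | (have := sizeOf_lt_of_mem x.2) | (have := sizeOf_lt_of_mem (by assumption : x ∈ _))); omega)

/-- The game ⟨∅^s | ∅^s⟩ of a real number `s`. -/
def num (s : ℝ) : SG := mk s s [] []

/-- The zero game ⟨∅^0 | ∅^0⟩. -/
def zero : SG := num 0

/-- Waiting moves: the image of the Normal-play integer `n`. -/
def wait : ℕ → SG
  | 0 => zero
  | n + 1 => mk 0 0 [wait n] []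

/-- Birthday: the depth of the game tree. -/
def birthday : SG → ℕ
  | mk _ _ ls rs =>
    max ((ls.attach.map (fun x => birthday x.1 + 1)).maximum.unbotD 0)
        ((rs.attach.map (fun x => birthday x.1 + 1)).maximum.unbotD 0)
decreasing_by all_goals (simp only [SG.mk.sizeOf_spec]; (first | (have := sizeOf_lt_of_mem x.2) | (have := sizeOf_lt_of_mem (by assumption : x ∈ _))); omega)

/-- `Ge G H` is the order `G ≽ H`. -/
def Ge (G H : SG) : Prop :=
  ∀ X : SG, X.Guaranteed → Ls (G.add X) ≥ Ls (H.add X) ∧ Rs (G.add X) ≥ Rs (H.add X)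

/-- Equivalence `G ∼ H`. -/
def Equiv (G H : SG) : Prop := Ge G H ∧ Ge H G

/-- Right's pass-allowed Left-stop `L̲s(G) = min_n Ls(G - n̂)`. -/
noncomputable def lsU (G : SG) : ℝ := ⨅ n : ℕ, Ls (G.add (wait n).conj)

/-- Left's pass-allowed Right-stop `R̄s(G) = max_n Rs(G + n̂)`. -/
noncomputable def rsO (G : SG) : ℝ := ⨆ n : ℕ, Rs (G.add (wait n))

/-- `L̄s(G) = max_n Ls(G + n̂)`. -/
noncomputable def lsO (G : SG) : ℝ := ⨆ n : ℕ, Ls (G.add (wait n))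

/-- `R̲s(G) = min_n Rs(G + n̂)`. -/
noncomputable def rsU (G : SG) : ℝ := ⨅ n : ℕ, Rs (G.add (wait n))

/-- Identity of games: same tree structure (up to reordering of options),
with identical atoms at atomic positions. -/
def Ident : SG → SG → Prop
  | mk a1 b1 L1 R1, mk a2 b2 L2 R2 =>
    (L1 = [] ↔ L2 = []) ∧ (L1 = [] → a1 = a2) ∧
    (R1 = [] ↔ R2 = []) ∧ (R1 = [] → b1 = b2) ∧
    (∀ x ∈ L1, ∃ y : {z // z ∈ L2}, Ident x y.1) ∧
    (∀ y ∈ L2, ∃ x : {z // z ∈ L1}, Ident x.1 y) ∧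
    (∀ x ∈ R1, ∃ y : {z // z ∈ R2}, Ident x y.1) ∧
    (∀ y ∈ R2, ∃ x : {z // z ∈ R1}, Ident x.1 y)
termination_by g h => sizeOf g
decreasing_by all_goals (simp only [SG.mk.sizeOf_spec]; (first | (have := sizeOf_lt_of_mem x.2) | (have := sizeOf_lt_of_mem (by assumption : x ∈ _))); omega)

/-- `Linked H G`: `H` is linked to `G` (by some guaranteed `T`). -/
def Linked (H G : SG) : Prop :=
  ∃ T : SG, T.Guaranteed ∧ Ls (H.add T) < 0 ∧ 0 < Rs (G.add T)

/-- Replace every atom of `G` by `∅^x`. -/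
def subst (v : ℝ) : SG → SG
  | mk _ _ ls rs =>
    mk v v (ls.attach.map (fun x => subst v x.1)) (rs.attach.map (fun x => subst v x.1))
decreasing_by all_goals (simp only [SG.mk.sizeOf_spec]; (first | (have := sizeOf_lt_of_mem x.2) | (have := sizeOf_lt_of_mem (by assumption : x ∈ _))); omega)

/-- The maximum atom value in `G`. -/
noncomputable def maxAtom (G : SG) : ℝ := G.atomList.maximum.unbotD 0

/-- The minimum atom value in `G`. -/
noncomputable def minAtom (G : SG) : ℝ := G.atomList.minimum.untopD 0

/-! Disjunctive sum is associative on the nose and commutative up to the order of options,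
which stops do not see; so `(G + K) + X` has the stops of `K + (G + X)`. If `K ∼ 0` and `G + X`
is guaranteed, these are the stops of `G + X`, i.e. `G + K ∼ G`. With `K = J + J'`, adding `J'`
to both sides of `G + J ≽ H + J` therefore gives `G ≽ H`; conversely `≽` is preserved by
adding `J`, because `J + X` is guaranteed whenever `X` is. -/

theorem sizeOf_lt_of_mem_L {x G : SG} (h : x ∈ G.L) : sizeOf x < sizeOf G := by
  obtain ⟨a, b, ls, rs⟩ := G
  have := sizeOf_lt_of_mem h
  simp only [L] at this
  simp only [SG.mk.sizeOf_spec]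
  omega

theorem sizeOf_lt_of_mem_R {x G : SG} (h : x ∈ G.R) : sizeOf x < sizeOf G := by
  obtain ⟨a, b, ls, rs⟩ := G
  have := sizeOf_lt_of_mem h
  simp only [R] at this
  simp only [SG.mk.sizeOf_spec]
  omega

theorem eta (G : SG) : mk G.la G.ra G.L G.R = G := by
  cases G; rfl

theorem add_eq (G H : SG) : G.add H =
    mk (G.la + H.la) (G.ra + H.ra)
      (G.L.map (·.add H) ++ H.L.map G.add) (G.R.map (·.add H) ++ H.R.map G.add) := by
  obtain ⟨a₁, b₁, L₁, R₁⟩ := G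
  obtain ⟨a₂, b₂, L₂, R₂⟩ := H
  rw [add]
  simp only [la, ra, L, R, List.attach_map_val (f := fun x => SG.add x (mk a₂ b₂ L₂ R₂)),
    List.attach_map_val (f := SG.add (mk a₁ b₁ L₁ R₁))]

@[simp] theorem la_add (G H : SG) : (G.add H).la = G.la + H.la := by rw [add_eq]; rfl
@[simp] theorem ra_add (G H : SG) : (G.add H).ra = G.ra + H.ra := by rw [add_eq]; rfl
@[simp] theorem L_add (G H : SG) : (G.add H).L = G.L.map (·.add H) ++ H.L.map G.add := by
  rw [add_eq]; rfl
@[simp] theorem R_add (G H : SG) : (G.add H).R = G.R.map (·.add H) ++ H.R.map G.add := by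
  rw [add_eq]; rfl

theorem zero_add (G : SG) : zero.add G = G := by
  have hL : G.L.map zero.add = G.L :=
    (List.map_congr_left fun x _ => zero_add x).trans (List.map_id _)
  have hR : G.R.map zero.add = G.R :=
    (List.map_congr_left fun x _ => zero_add x).trans (List.map_id _)
  rw [add_eq, hL, hR]
  simpa [zero, num, la, ra, L, R] using eta G
termination_by sizeOf G
decreasing_by
  · exact sizeOf_lt_of_mem_L ‹_›
  · exact sizeOf_lt_of_mem_R ‹_›

theorem add_assoc (A B C : SG) : (A.add B).add C = A.add (B.add C) := by
  rw [add_eq (A.add B) C, add_eq A (B.add C)]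
  simp only [la_add, ra_add, L_add, R_add, List.map_append, List.map_map, List.append_assoc,
    _root_.add_assoc]
  congr 2 <;> [skip; congr 1; skip; congr 1] <;> refine List.map_congr_left fun k _ => ?_ <;>
    exact add_assoc ..
termination_by sizeOf A + sizeOf B + sizeOf C
decreasing_by all_goals
  first
  | have := sizeOf_lt_of_mem_L ‹_›; omega
  | have := sizeOf_lt_of_mem_R ‹_›; omega

theorem stops_eq (G : SG) : G.stops =
    (if G.L.isEmpty then G.la else (G.L.map Rs).maximum.unbotD 0,
     if G.R.isEmpty then G.ra else (G.R.map Ls).minimum.untopD 0) := by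
  obtain ⟨a, b, ls, rs⟩ := G
  rw [stops, List.attach_map_val (l := ls) (f := fun x => x.stops.2),
    List.attach_map_val (l := rs) (f := fun x => x.stops.1)]
  rfl

theorem stops_eq_of_perm {G G' : SG} (hla : G.la = G'.la) (hra : G.ra = G'.ra)
    (hL : (G.L.map Rs).Perm (G'.L.map Rs)) (hR : (G.R.map Ls).Perm (G'.R.map Ls)) :
    G.stops = G'.stops := by
  have hLe : G.L.isEmpty = G'.L.isEmpty := by simpa using hL.isEmpty_eq
  have hRe : G.R.isEmpty = G'.R.isEmpty := by simpa using hR.isEmpty_eq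
  rw [stops_eq, stops_eq, hla, hra, hLe, hRe, hL.maximum_eq, hR.minimum_eq]

theorem stops_add_left_comm (A B C : SG) :
    stops (A.add (B.add C)) = stops (B.add (A.add C)) := by
  apply stops_eq_of_perm
  · simp only [la_add, add_left_comm]
  · simp only [ra_add, add_left_comm]
  · simp only [L_add, List.map_append, List.map_map]
    refine (List.perm_append_comm_assoc _ _ _).trans (List.Perm.of_eq ?_)
    congr 1 <;> [skip; congr 1] <;> refine List.map_congr_left fun k _ => ?_ <;>
      exact congrArg Prod.snd (stops_add_left_comm ..)
  · simp only [R_add, List.map_append, List.map_map]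
    refine (List.perm_append_comm_assoc _ _ _).trans (List.Perm.of_eq ?_)
    congr 1 <;> [skip; congr 1] <;> refine List.map_congr_left fun k _ => ?_ <;>
      exact congrArg Prod.fst (stops_add_left_comm ..)
termination_by sizeOf A + sizeOf B + sizeOf C
decreasing_by all_goals
  first
  | have := sizeOf_lt_of_mem_L ‹_›; omega
  | have := sizeOf_lt_of_mem_R ‹_›; omega

theorem mem_atomList_iff {G : SG} {s : ℝ} : s ∈ G.atomList ↔
    (G.L = [] ∧ s = G.la) ∨ (G.R = [] ∧ s = G.ra) ∨
      (∃ x ∈ G.L, s ∈ x.atomList) ∨ ∃ x ∈ G.R, s ∈ x.atomList := by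
  obtain ⟨a, b, ls, rs⟩ := G
  rw [atomList]
  cases ls <;> cases rs <;> simp [L, R, la, ra, eq_comm, or_assoc, or_comm, or_left_comm]

theorem la_mem_atomList {G : SG} (h : G.L = []) : G.la ∈ G.atomList :=
  mem_atomList_iff.2 (Or.inl ⟨h, rfl⟩)

theorem ra_mem_atomList {G : SG} (h : G.R = []) : G.ra ∈ G.atomList :=
  mem_atomList_iff.2 (Or.inr (Or.inl ⟨h, rfl⟩))

theorem mem_atomList_of_mem_L {x G : SG} {s : ℝ} (hx : x ∈ G.L) (hs : s ∈ x.atomList) :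
    s ∈ G.atomList :=
  mem_atomList_iff.2 (Or.inr (Or.inr (Or.inl ⟨x, hx, hs⟩)))

theorem mem_atomList_of_mem_R {x G : SG} {s : ℝ} (hx : x ∈ G.R) (hs : s ∈ x.atomList) :
    s ∈ G.atomList :=
  mem_atomList_iff.2 (Or.inr (Or.inr (Or.inr ⟨x, hx, hs⟩)))

theorem mem_atomList_add {G H : SG} {s : ℝ} (h : s ∈ (G.add H).atomList) :
    ∃ u ∈ G.atomList, ∃ v ∈ H.atomList, s = u + v := by
  rw [mem_atomList_iff] at h
  simp only [L_add, R_add, List.append_eq_nil_iff, List.map_eq_nil_iff, List.mem_append,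
    List.mem_map, la_add, ra_add] at h
  rcases h with ⟨⟨hG, hH⟩, rfl⟩ | ⟨⟨hG, hH⟩, rfl⟩ | ⟨_, ⟨x, hx, rfl⟩ | ⟨x, hx, rfl⟩, hs⟩ |
      ⟨_, ⟨x, hx, rfl⟩ | ⟨x, hx, rfl⟩, hs⟩
  · exact ⟨_, la_mem_atomList hG, _, la_mem_atomList hH, rfl⟩
  · exact ⟨_, ra_mem_atomList hG, _, ra_mem_atomList hH, rfl⟩
  all_goals obtain ⟨u, hu, v, hv, rfl⟩ := mem_atomList_add hs
  · exact ⟨u, mem_atomList_of_mem_L hx hu, v, hv, rfl⟩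
  · exact ⟨u, hu, v, mem_atomList_of_mem_L hx hv, rfl⟩
  · exact ⟨u, mem_atomList_of_mem_R hx hu, v, hv, rfl⟩
  · exact ⟨u, hu, v, mem_atomList_of_mem_R hx hv, rfl⟩
termination_by sizeOf G + sizeOf H
decreasing_by all_goals
  first
  | have := sizeOf_lt_of_mem_L ‹_›; omega
  | have := sizeOf_lt_of_mem_R ‹_›; omega

theorem guaranteed_iff (G : SG) : G.Guaranteed ↔
    (∀ x ∈ G.L, x.Guaranteed) ∧ (∀ x ∈ G.R, x.Guaranteed) ∧
      (G.L = [] → ∀ s ∈ G.atomList, G.la ≤ s) ∧ (G.R = [] → ∀ s ∈ G.atomList, s ≤ G.ra) := by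
  obtain ⟨a, b, ls, rs⟩ := G
  rw [Guaranteed]
  rfl

theorem Guaranteed.add {G H : SG} (hG : G.Guaranteed) (hH : H.Guaranteed) :
    (G.add H).Guaranteed := by
  obtain ⟨hGL, hGR, hGla, hGra⟩ := (guaranteed_iff G).1 hG
  obtain ⟨hHL, hHR, hHla, hHra⟩ := (guaranteed_iff H).1 hH
  rw [guaranteed_iff]
  simp only [L_add, R_add, List.mem_append, List.mem_map, List.append_eq_nil_iff,
    List.map_eq_nil_iff, la_add, ra_add]
  refine ⟨?_, ?_, ?_, ?_⟩
  · rintro _ (⟨x, hx, rfl⟩ | ⟨x, hx, rfl⟩)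
    exacts [(hGL x hx).add hH, hG.add (hHL x hx)]
  · rintro _ (⟨x, hx, rfl⟩ | ⟨x, hx, rfl⟩)
    exacts [(hGR x hx).add hH, hG.add (hHR x hx)]
  · rintro ⟨hG0, hH0⟩ s hs
    obtain ⟨u, hu, v, hv, rfl⟩ := mem_atomList_add hs
    exact add_le_add (hGla hG0 u hu) (hHla hH0 v hv)
  · rintro ⟨hG0, hH0⟩ s hs
    obtain ⟨u, hu, v, hv, rfl⟩ := mem_atomList_add hs
    exact add_le_add (hGra hG0 u hu) (hHra hH0 v hv)
termination_by sizeOf G + sizeOf H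
decreasing_by all_goals
  first
  | have := sizeOf_lt_of_mem_L ‹_›; omega
  | have := sizeOf_lt_of_mem_R ‹_›; omega

theorem Ge.trans {G H K : SG} (hGH : G.Ge H) (hHK : H.Ge K) : G.Ge K := fun X hX =>
  ⟨(hHK X hX).1.trans (hGH X hX).1, (hHK X hX).2.trans (hGH X hX).2⟩

theorem Ge.add_right {G H : SG} (h : G.Ge H) {J : SG} (hJ : J.Guaranteed) :
    (G.add J).Ge (H.add J) := by
  intro X hX
  rw [add_assoc, add_assoc]
  exact h _ (hJ.add hX)

theorem equiv_iff_stops_add_eq {G H : SG} :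
    Equiv G H ↔ ∀ X : SG, X.Guaranteed → stops (G.add X) = stops (H.add X) := by
  refine ⟨fun h X hX => Prod.ext ?_ ?_, fun h => ⟨fun X hX => ?_, fun X hX => ?_⟩⟩
  · exact le_antisymm (h.2 X hX).1 (h.1 X hX).1
  · exact le_antisymm (h.2 X hX).2 (h.1 X hX).2
  all_goals simp only [Ls, Rs, h X hX, ge_iff_le, le_refl, and_self]

theorem equiv_add_of_equiv_zero {G K : SG} (hG : G.Guaranteed) (hK : Equiv K zero) :
    Equiv (G.add K) G := by
  refine equiv_iff_stops_add_eq.2 fun X hX => ?_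
  rw [add_assoc, stops_add_left_comm, equiv_iff_stops_add_eq.1 hK _ (hG.add hX), zero_add]

/-- If `J` is invertible then `G + J ≽ H + J ↔ G ≽ H`. -/
theorem ge_add_iff_of_invertible (G H J : SG) (hG : G.Guaranteed)
    (hH : H.Guaranteed) (hJ : J.Guaranteed)
    (hinv : ∃ J' : SG, J'.Guaranteed ∧ Equiv (J.add J') zero) :
    (G.add J).Ge (H.add J) ↔ G.Ge H := by
  obtain ⟨J', hJ', hJJ'⟩ := hinv
  refine ⟨fun h => ?_, fun h => h.add_right hJ⟩
  have h' := h.add_right hJ'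
  rw [add_assoc, add_assoc] at h'
  exact ((equiv_add_of_equiv_zero hG hJJ').2.trans h').trans (equiv_add_of_equiv_zero hH hJJ').1

end SG
end

section
/- If G and H are guaranteed scoring games with H = ⟨∅^h | H^R⟩ left-atomic, then Ls(G+H) ≥ L̲s(G+H) = L̲s(G) + h. -/
namespace SG

/-!
Write `negWait n` for `-n̂`, i.e. `n` passes available to Right. In a guaranteed game `X`
the stops of `X - n̂` decrease with `n`, and each of them is an atom of `X`, so `L̲s` is a
genuine minimum. Adding a game `Y` all of whose atoms are at least `h` gains Left at least `h`
once Right is given `b(Y)` extra passes: Left copies her play in `X`, moves in `Y` when `X`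
is Left-atomic, and treats each Right move in `Y` as a Right pass in `X`. Adding a left-atomic
`H = ⟨∅^h | H^R⟩` gains Left at most `h` once Right is given `b(X)` extra passes: Right never
moves in `H`, copies his play in `X`, and passes where he would have passed or been stuck; the
guaranteed condition bounds the score reached that way. Letting the number of passes grow gives
`L̲s(G + H) = L̲s(G) + h`, and `Ls(G + H) = Ls(G + H - 0̂) ≥ L̲s(G + H)`.
-/
theorem induction_options {motive : SG → Prop}
    (X : SG) (step : ∀ X, (∀ l ∈ X.L, motive l) → (∀ r ∈ X.R, motive r) → motive X) :
    motive X :=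
  match X with
  | mk a b ls rs =>
    step (mk a b ls rs) (fun l _ => induction_options l step) (fun r _ => induction_options r step)
termination_by X
decreasing_by
  all_goals simp only [mk.sizeOf_spec]
  · have := sizeOf_lt_of_mem (by assumption : l ∈ ls); omega
  · have := sizeOf_lt_of_mem (by assumption : r ∈ rs); omega

theorem add_def (X Y : SG) : X.add Y = mk (X.la + Y.la) (X.ra + Y.ra)
    (X.L.map (·.add Y) ++ Y.L.map X.add) (X.R.map (·.add Y) ++ Y.R.map X.add) := by
  cases X; cases Y
  rw [add]
  simp [la, ra, L, R]

@[simp] theorem la_add_s8 (X Y : SG) : (X.add Y).la = X.la + Y.la := by rw [add_def]; rfl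
@[simp] theorem ra_add_s8 (X Y : SG) : (X.add Y).ra = X.ra + Y.ra := by rw [add_def]; rfl
@[simp] theorem L_add_s8 (X Y : SG) : (X.add Y).L = X.L.map (·.add Y) ++ Y.L.map X.add := by
  rw [add_def]; rfl
@[simp] theorem R_add_s8 (X Y : SG) : (X.add Y).R = X.R.map (·.add Y) ++ Y.R.map X.add := by
  rw [add_def]; rfl

theorem mem_L_add {X Y z : SG} :
    z ∈ (X.add Y).L ↔ (∃ l ∈ X.L, z = l.add Y) ∨ ∃ l ∈ Y.L, z = X.add l := by
  simp [eq_comm]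

theorem mem_R_add {X Y z : SG} :
    z ∈ (X.add Y).R ↔ (∃ r ∈ X.R, z = r.add Y) ∨ ∃ r ∈ Y.R, z = X.add r := by
  simp [eq_comm]

theorem add_mem_L_add_left {X Y l : SG} (hl : l ∈ X.L) : l.add Y ∈ (X.add Y).L :=
  mem_L_add.2 (Or.inl ⟨l, hl, rfl⟩)

theorem add_mem_L_add_right {X Y l : SG} (hl : l ∈ Y.L) : X.add l ∈ (X.add Y).L :=
  mem_L_add.2 (Or.inr ⟨l, hl, rfl⟩)

theorem add_mem_R_add_left {X Y r : SG} (hr : r ∈ X.R) : r.add Y ∈ (X.add Y).R :=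
  mem_R_add.2 (Or.inl ⟨r, hr, rfl⟩)

theorem Ls_eq (X : SG) : Ls X = if X.L = [] then X.la else (X.L.map Rs).maximum.unbotD 0 := by
  cases X
  simp only [Ls, stops, L, la, List.isEmpty_iff, List.attach_map_val (f := fun g : SG => g.stops.2)]
  rfl

theorem Rs_eq (X : SG) : Rs X = if X.R = [] then X.ra else (X.R.map Ls).minimum.untopD 0 := by
  cases X
  simp only [Rs, stops, R, ra, List.isEmpty_iff, List.attach_map_val (f := fun g : SG => g.stops.1)]
  rfl

theorem Ls_of_L_eq_nil {X : SG} (h : X.L = []) : Ls X = X.la := by rw [Ls_eq, if_pos h]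
theorem Rs_of_R_eq_nil {X : SG} (h : X.R = []) : Rs X = X.ra := by rw [Rs_eq, if_pos h]

theorem Ls_le_iff {X : SG} {c : ℝ} :
    Ls X ≤ c ↔ (X.L = [] → X.la ≤ c) ∧ ∀ l ∈ X.L, Rs l ≤ c := by
  rw [Ls_eq]
  split_ifs with h
  · simp [h]
  · rw [WithBot.unbotD_le_iff (by simp [h])]
    refine ⟨fun hc => ⟨by simp [h], fun l hl => ?_⟩, fun hc => List.maximum_le_of_forall_le ?_⟩
    · exact WithBot.coe_le_coe.1 ((List.le_maximum_of_mem' (List.mem_map_of_mem hl)).trans hc)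
    · simpa using hc.2

theorem le_Ls_iff {X : SG} {c : ℝ} :
    c ≤ Ls X ↔ (X.L = [] ∧ c ≤ X.la) ∨ ∃ l ∈ X.L, c ≤ Rs l := by
  rw [Ls_eq]
  split_ifs with h
  · simp [h]
  · rw [WithBot.le_unbotD_iff (by simp [h]), List.coe_le_maximum_iff]
    simp [h]

theorem Rs_le_iff {X : SG} {c : ℝ} :
    Rs X ≤ c ↔ (X.R = [] ∧ X.ra ≤ c) ∨ ∃ r ∈ X.R, Ls r ≤ c := by
  rw [Rs_eq]
  split_ifs with h
  · simp [h]
  · rw [WithTop.untopD_le_iff (by simp [h]), List.minimum_le_coe_iff]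
    simp [h]

theorem le_Rs_iff {X : SG} {c : ℝ} :
    c ≤ Rs X ↔ (X.R = [] → c ≤ X.ra) ∧ ∀ r ∈ X.R, c ≤ Ls r := by
  rw [Rs_eq]
  split_ifs with h
  · simp [h]
  · rw [WithTop.le_untopD_iff (by simp [h])]
    refine ⟨fun hc => ⟨by simp [h], fun r hr => ?_⟩, fun hc => List.le_minimum_of_forall_le ?_⟩
    · exact WithTop.coe_le_coe.1 (hc.trans (List.minimum_le_of_mem' (List.mem_map_of_mem hr)))
    · simpa using hc.2

theorem Rs_le_Ls_of_mem_L {X l : SG} (hl : l ∈ X.L) : Rs l ≤ Ls X :=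
  (Ls_le_iff.1 le_rfl).2 l hl

theorem Rs_le_Ls_of_mem_R {X r : SG} (hr : r ∈ X.R) : Rs X ≤ Ls r :=
  (le_Rs_iff.1 le_rfl).2 r hr

theorem mem_atomList_iff_s8 {X : SG} {s : ℝ} : s ∈ X.atomList ↔
    (X.L = [] ∧ s = X.la) ∨ (∃ l ∈ X.L, s ∈ l.atomList) ∨
    (X.R = [] ∧ s = X.ra) ∨ (∃ r ∈ X.R, s ∈ r.atomList) := by
  cases X with
  | mk a b ls rs =>
    rw [atomList, List.attach_map_val (f := atomList), List.attach_map_val (f := atomList)]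
    by_cases hl : ls = [] <;> by_cases hr : rs = [] <;> simp [hl, hr, L, R, la, ra]

theorem mem_atomList_of_mem_L_s8 {X l : SG} (hl : l ∈ X.L) {s : ℝ} (hs : s ∈ l.atomList) :
    s ∈ X.atomList :=
  mem_atomList_iff_s8.2 (Or.inr (Or.inl ⟨l, hl, hs⟩))

theorem mem_atomList_of_mem_R_s8 {X r : SG} (hr : r ∈ X.R) {s : ℝ} (hs : s ∈ r.atomList) :
    s ∈ X.atomList :=
  mem_atomList_iff_s8.2 (Or.inr (Or.inr (Or.inr ⟨r, hr, hs⟩)))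

theorem la_mem_atomList_s8 {X : SG} (h : X.L = []) : X.la ∈ X.atomList :=
  mem_atomList_iff_s8.2 (Or.inl ⟨h, rfl⟩)

theorem ra_mem_atomList_s8 {X : SG} (h : X.R = []) : X.ra ∈ X.atomList :=
  mem_atomList_iff_s8.2 (Or.inr (Or.inr (Or.inl ⟨h, rfl⟩)))

theorem exists_mem_L_Ls_eq {X : SG} (h : X.L ≠ []) : ∃ l ∈ X.L, Ls X = Rs l := by
  obtain ⟨l, hl, hle⟩ := (le_Ls_iff.1 le_rfl).resolve_left (fun h' => h h'.1)
  exact ⟨l, hl, le_antisymm hle (Rs_le_Ls_of_mem_L hl)⟩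

theorem exists_mem_R_Rs_eq {X : SG} (h : X.R ≠ []) : ∃ r ∈ X.R, Rs X = Ls r := by
  obtain ⟨r, hr, hle⟩ := (Rs_le_iff.1 le_rfl).resolve_left (fun h' => h h'.1)
  exact ⟨r, hr, le_antisymm (Rs_le_Ls_of_mem_R hr) hle⟩

theorem stops_mem_atomList (X : SG) : Ls X ∈ X.atomList ∧ Rs X ∈ X.atomList := by
  induction X using induction_options with
  | step X ihL ihR =>
    constructor
    · by_cases h : X.L = []
      · exact Ls_of_L_eq_nil h ▸ la_mem_atomList_s8 h
      · obtain ⟨l, hl, hLs⟩ := exists_mem_L_Ls_eq h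
        exact hLs ▸ mem_atomList_of_mem_L_s8 hl (ihL l hl).2
    · by_cases h : X.R = []
      · exact Rs_of_R_eq_nil h ▸ ra_mem_atomList_s8 h
      · obtain ⟨r, hr, hRs⟩ := exists_mem_R_Rs_eq h
        exact hRs ▸ mem_atomList_of_mem_R_s8 hr (ihR r hr).1

theorem exists_mem_atomList_add {X Y : SG} {s : ℝ} (hs : s ∈ (X.add Y).atomList) :
    ∃ u ∈ X.atomList, ∃ v ∈ Y.atomList, s = u + v := by
  induction X using induction_options generalizing Y s with
  | step X ihXL ihXR =>
  induction Y using induction_options generalizing s with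
  | step Y ihYL ihYR =>
  rw [mem_atomList_iff_s8] at hs
  simp only [L_add_s8, R_add_s8, List.append_eq_nil_iff, List.map_eq_nil_iff,
    List.mem_append, List.mem_map, la_add_s8, ra_add_s8] at hs
  rcases hs with ⟨⟨hXL, hYL⟩, rfl⟩ | ⟨z, hz, hs⟩ | ⟨⟨hXR, hYR⟩, rfl⟩ | ⟨z, hz, hs⟩
  · exact ⟨_, la_mem_atomList_s8 hXL, _, la_mem_atomList_s8 hYL, rfl⟩
  · rcases hz with ⟨l, hl, rfl⟩ | ⟨l, hl, rfl⟩
    · obtain ⟨u, hu, v, hv, rfl⟩ := ihXL l hl hs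
      exact ⟨u, mem_atomList_of_mem_L_s8 hl hu, v, hv, rfl⟩
    · obtain ⟨u, hu, v, hv, rfl⟩ := ihYL l hl hs
      exact ⟨u, hu, v, mem_atomList_of_mem_L_s8 hl hv, rfl⟩
  · exact ⟨_, ra_mem_atomList_s8 hXR, _, ra_mem_atomList_s8 hYR, rfl⟩
  · rcases hz with ⟨r, hr, rfl⟩ | ⟨r, hr, rfl⟩
    · obtain ⟨u, hu, v, hv, rfl⟩ := ihXR r hr hs
      exact ⟨u, mem_atomList_of_mem_R_s8 hr hu, v, hv, rfl⟩
    · obtain ⟨u, hu, v, hv, rfl⟩ := ihYR r hr hs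
      exact ⟨u, hu, v, mem_atomList_of_mem_R_s8 hr hv, rfl⟩

theorem guaranteed_iff_s8 {X : SG} : X.Guaranteed ↔
    (∀ l ∈ X.L, l.Guaranteed) ∧ (∀ r ∈ X.R, r.Guaranteed) ∧
    (X.L = [] → ∀ s ∈ X.atomList, X.la ≤ s) ∧ (X.R = [] → ∀ s ∈ X.atomList, s ≤ X.ra) := by
  cases X
  rw [Guaranteed]
  rfl

namespace Guaranteed

variable {X : SG} (hX : X.Guaranteed)
include hX

theorem of_mem_L {l : SG} (hl : l ∈ X.L) : l.Guaranteed := (guaranteed_iff_s8.1 hX).1 l hl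
theorem of_mem_R {r : SG} (hr : r ∈ X.R) : r.Guaranteed := (guaranteed_iff_s8.1 hX).2.1 r hr
theorem la_le (hL : X.L = []) {s : ℝ} (hs : s ∈ X.atomList) : X.la ≤ s :=
  (guaranteed_iff_s8.1 hX).2.2.1 hL s hs
theorem le_ra (hR : X.R = []) {s : ℝ} (hs : s ∈ X.atomList) : s ≤ X.ra :=
  (guaranteed_iff_s8.1 hX).2.2.2 hR s hs

end Guaranteed

theorem birthday_eq (X : SG) : X.birthday =
    max ((X.L.map (·.birthday + 1)).maximum.unbotD 0)
      ((X.R.map (·.birthday + 1)).maximum.unbotD 0) := by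
  cases X
  rw [birthday, List.attach_map_val (f := fun x : SG => x.birthday + 1),
    List.attach_map_val (f := fun x : SG => x.birthday + 1)]
  rfl

theorem _root_.List.le_maximum_unbotD_of_mem {α : Type*} [LinearOrder α] {l : List α} {a : α}
    (d : α) (h : a ∈ l) : a ≤ l.maximum.unbotD d :=
  (WithBot.le_unbotD_iff (List.maximum_ne_bot_of_ne_nil (List.ne_nil_of_mem h))).2
    (List.le_maximum_of_mem' h)

theorem birthday_lt_of_mem_L {X l : SG} (hl : l ∈ X.L) : l.birthday < X.birthday := by
  rw [birthday_eq X, Nat.lt_iff_add_one_le]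
  exact le_max_of_le_left (List.le_maximum_unbotD_of_mem 0 (List.mem_map_of_mem hl))

theorem birthday_lt_of_mem_R {X r : SG} (hr : r ∈ X.R) : r.birthday < X.birthday := by
  rw [birthday_eq X, Nat.lt_iff_add_one_le]
  exact le_max_of_le_right (List.le_maximum_unbotD_of_mem 0 (List.mem_map_of_mem hr))

noncomputable def negWait (n : ℕ) : SG := (wait n).conj

theorem negWait_zero : negWait 0 = mk 0 0 [] [] := by
  simp [negWait, wait, zero, num, conj]

theorem negWait_succ (n : ℕ) : negWait (n + 1) = mk 0 0 [] [negWait n] := by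
  simp [negWait, wait, conj]

@[simp] theorem la_negWait (n : ℕ) : (negWait n).la = 0 := by
  cases n <;> simp [negWait_zero, negWait_succ, la]
@[simp] theorem ra_negWait (n : ℕ) : (negWait n).ra = 0 := by
  cases n <;> simp [negWait_zero, negWait_succ, ra]
@[simp] theorem L_negWait (n : ℕ) : (negWait n).L = [] := by
  cases n <;> simp [negWait_zero, negWait_succ, L]
@[simp] theorem R_negWait_zero : (negWait 0).R = [] := by simp [negWait_zero, R]
@[simp] theorem R_negWait_succ (n : ℕ) : (negWait (n + 1)).R = [negWait n] := by
  simp [negWait_succ, R]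

theorem eq_zero_of_mem_atomList_negWait {n : ℕ} {s : ℝ} (hs : s ∈ (negWait n).atomList) :
    s = 0 := by
  induction n with
  | zero => rw [mem_atomList_iff_s8] at hs; simpa using hs
  | succ n ih =>
    rw [mem_atomList_iff_s8] at hs
    simp only [L_negWait, la_negWait, R_negWait_succ, ra_negWait, true_and, List.not_mem_nil,
      false_and, exists_false, List.cons_ne_self, List.mem_cons, or_false, exists_eq_left,
      false_or] at hs
    exact hs.elim id ih

protected theorem add_negWait_zero (X : SG) : X.add (negWait 0) = X := by
  induction X using induction_options with
  | step X ihL ihR =>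
    rw [add_def, List.map_congr_left ihL, List.map_congr_left ihR]
    simp only [la_negWait, ra_negWait, L_negWait, R_negWait_zero, add_zero, List.map_nil,
      List.append_nil, List.map_id']
    cases X; rfl

theorem mem_atomList_of_mem_atomList_add_negWait {X : SG} {n : ℕ} {s : ℝ}
    (hs : s ∈ (X.add (negWait n)).atomList) : s ∈ X.atomList := by
  obtain ⟨u, hu, v, hv, rfl⟩ := exists_mem_atomList_add hs
  rwa [eq_zero_of_mem_atomList_negWait hv, add_zero]

theorem Ls_add_negWait_mem_atomList (X : SG) (n : ℕ) : Ls (X.add (negWait n)) ∈ X.atomList :=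
  mem_atomList_of_mem_atomList_add_negWait (stops_mem_atomList _).1

theorem Rs_add_negWait_mem_atomList (X : SG) (n : ℕ) : Rs (X.add (negWait n)) ∈ X.atomList :=
  mem_atomList_of_mem_atomList_add_negWait (stops_mem_atomList _).2

theorem Rs_add_negWait_succ_le (X : SG) (n : ℕ) :
    Rs (X.add (negWait (n + 1))) ≤ Ls (X.add (negWait n)) :=
  Rs_le_Ls_of_mem_R (by simp)

theorem mem_R_negWait {n : ℕ} {z : SG} : z ∈ (negWait n).R ↔ ∃ k, n = k + 1 ∧ z = negWait k := by
  cases n <;> simp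

theorem stops_add_negWait_succ_le {X : SG} (hX : X.Guaranteed) (n : ℕ) :
    Ls (X.add (negWait (n + 1))) ≤ Ls (X.add (negWait n)) ∧
      Rs (X.add (negWait (n + 1))) ≤ Rs (X.add (negWait n)) := by
  induction X using induction_options generalizing n with
  | step X ihL ihR =>
  have hLs (n : ℕ) : Ls (X.add (negWait (n + 1))) ≤ Ls (X.add (negWait n)) := by
    refine Ls_le_iff.2 ⟨fun h => ?_, fun z hz => ?_⟩
    · simp_all [Ls_of_L_eq_nil]
    · obtain ⟨l, hl, rfl⟩ := (mem_L_add.1 hz).resolve_right (by simp)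
      exact (ihL l hl (hX.of_mem_L hl) n).2.trans (Rs_le_Ls_of_mem_L (add_mem_L_add_left hl))
  refine ⟨hLs n, le_Rs_iff.2 ⟨fun h => ?_, fun z hz => ?_⟩⟩
  · simp only [R_add_s8, List.append_eq_nil_iff, List.map_eq_nil_iff] at h
    simpa using hX.le_ra h.1 (Rs_add_negWait_mem_atomList X (n + 1))
  · rcases mem_R_add.1 hz with ⟨r, hr, rfl⟩ | ⟨_, hw, rfl⟩
    · exact (Rs_le_Ls_of_mem_R (add_mem_R_add_left hr)).trans (ihR r hr (hX.of_mem_R hr) n).1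
    · obtain ⟨k, rfl, rfl⟩ := mem_R_negWait.1 hw
      exact (Rs_add_negWait_succ_le X (k + 1)).trans (hLs k)

theorem antitone_Ls_add_negWait {X : SG} (hX : X.Guaranteed) :
    Antitone fun n => Ls (X.add (negWait n)) :=
  antitone_nat_of_succ_le fun n => (stops_add_negWait_succ_le hX n).1

theorem Rs_add_negWait_le_Ls_of_lt {X : SG} (hX : X.Guaranteed) {k m : ℕ} (hkm : k < m) :
    Rs (X.add (negWait m)) ≤ Ls (X.add (negWait k)) := by
  obtain ⟨m, rfl⟩ : ∃ m', m = m' + 1 := ⟨m - 1, by omega⟩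
  exact (Rs_add_negWait_succ_le X m).trans (antitone_Ls_add_negWait hX (by omega))

theorem le_stops_add_of_le_atomList {X Y : SG} (hX : X.Guaranteed) {h : ℝ}
    (hY : ∀ s ∈ Y.atomList, h ≤ s) (n : ℕ) :
    Ls (X.add (negWait (n + Y.birthday))) + h ≤ Ls ((X.add Y).add (negWait n)) ∧
      Rs (X.add (negWait (n + Y.birthday))) + h ≤ Rs ((X.add Y).add (negWait n)) := by
  induction X using induction_options generalizing Y n with
  | step X ihXL ihXR =>
  induction Y using induction_options generalizing n with
  | step Y ihYL ihYR =>
  have hLs (n : ℕ) :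
      Ls (X.add (negWait (n + Y.birthday))) + h ≤ Ls ((X.add Y).add (negWait n)) := by
    rw [← le_sub_iff_add_le]
    refine Ls_le_iff.2 ⟨fun hXL => ?_, fun z hz => ?_⟩
    · simp only [L_add_s8, L_negWait, List.map_nil, List.append_nil, List.map_eq_nil_iff] at hXL
      rw [la_add_s8, la_negWait, add_zero, le_sub_iff_add_le]
      by_cases hYL : Y.L = []
      · rw [Ls_of_L_eq_nil (by simp [hXL, hYL])]
        simpa using hY _ (la_mem_atomList_s8 hYL)
      · obtain ⟨y, hy⟩ := List.exists_mem_of_ne_nil _ hYL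
        calc X.la + h ≤ Rs (X.add (negWait (n + y.birthday))) + h := by
              gcongr; exact hX.la_le hXL (Rs_add_negWait_mem_atomList _ _)
          _ ≤ Rs ((X.add y).add (negWait n)) :=
              (ihYL y hy (fun s hs => hY s (mem_atomList_of_mem_L_s8 hy hs)) n).2
          _ ≤ Ls ((X.add Y).add (negWait n)) :=
              Rs_le_Ls_of_mem_L (add_mem_L_add_left (add_mem_L_add_right hy))
    · obtain ⟨l, hl, rfl⟩ := (mem_L_add.1 hz).resolve_right (by simp)
      rw [le_sub_iff_add_le]
      exact (ihXL l hl (hX.of_mem_L hl) hY n).2.trans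
        (Rs_le_Ls_of_mem_L (add_mem_L_add_left (add_mem_L_add_left hl)))
  refine ⟨hLs n, le_Rs_iff.2 ⟨fun hR => ?_, fun z hz => ?_⟩⟩
  · simp only [R_add_s8, List.append_eq_nil_iff, List.map_eq_nil_iff] at hR
    rw [ra_add_s8, ra_add_s8, ra_negWait, add_zero]
    exact add_le_add (hX.le_ra hR.1.1 (Rs_add_negWait_mem_atomList _ _))
      (hY _ (ra_mem_atomList_s8 hR.1.2))
  · rcases mem_R_add.1 hz with ⟨z', hz', rfl⟩ | ⟨_, hw, rfl⟩
    · rcases mem_R_add.1 hz' with ⟨r, hr, rfl⟩ | ⟨r, hr, rfl⟩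
      · exact (add_le_add_left (Rs_le_Ls_of_mem_R (add_mem_R_add_left hr)) h).trans
          (ihXR r hr (hX.of_mem_R hr) hY n).1
      · have hb := birthday_lt_of_mem_R hr
        exact (add_le_add_left (Rs_add_negWait_le_Ls_of_lt hX (by omega)) h).trans
          (ihYR r hr (fun s hs => hY s (mem_atomList_of_mem_R_s8 hr hs)) n).1
    · obtain ⟨k, rfl, rfl⟩ := mem_R_negWait.1 hw
      exact (add_le_add_left (Rs_add_negWait_le_Ls_of_lt hX (by omega)) h).trans (hLs k)

theorem stops_add_le_of_L_eq_nil {X H : SG} (hX : X.Guaranteed) (hH : H.L = []) {n m : ℕ} :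
    (n + X.birthday ≤ m → Ls ((X.add H).add (negWait m)) ≤ Ls (X.add (negWait n)) + H.la) ∧
      (n + X.birthday < m → Rs ((X.add H).add (negWait m)) ≤ Rs (X.add (negWait n)) + H.la) := by
  induction X using induction_options generalizing n m with
  | step X ihL ihR =>
  have hLs {n m : ℕ} (hm : n + X.birthday ≤ m) :
      Ls ((X.add H).add (negWait m)) ≤ Ls (X.add (negWait n)) + H.la := by
    refine Ls_le_iff.2 ⟨fun hXL => ?_, fun z hz => ?_⟩
    · simp only [L_add_s8, L_negWait, hH, List.map_nil, List.append_nil, List.map_eq_nil_iff] at hXL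
      rw [Ls_of_L_eq_nil (by simp [hXL])]
      simp
    · obtain ⟨l, hl, rfl⟩ : ∃ l ∈ X.L, z = (l.add H).add (negWait m) := by
        simpa [hH, eq_comm] using hz
      have hb := birthday_lt_of_mem_L hl
      calc Rs ((l.add H).add (negWait m)) ≤ Rs (l.add (negWait n)) + H.la :=
            (ihL l hl (hX.of_mem_L hl)).2 (by omega)
        _ ≤ Ls (X.add (negWait n)) + H.la := by
            gcongr; exact Rs_le_Ls_of_mem_L (add_mem_L_add_left hl)
  refine ⟨hLs, fun hm => ?_⟩
  obtain ⟨m, rfl⟩ : ∃ m', m = m' + 1 := ⟨m - 1, by omega⟩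
  have hwait {k : ℕ} (hk : k + X.birthday ≤ m) :
      Rs ((X.add H).add (negWait (m + 1))) ≤ Ls (X.add (negWait k)) + H.la :=
    (Rs_add_negWait_succ_le _ m).trans (hLs hk)
  rw [← sub_le_iff_le_add]
  refine le_Rs_iff.2 ⟨fun hR => ?_, fun z hz => ?_⟩
  · simp only [R_add_s8, List.append_eq_nil_iff, List.map_eq_nil_iff] at hR
    rw [ra_add_s8, ra_negWait, add_zero, sub_le_iff_le_add]
    exact (hwait (k := n) (by omega)).trans
      (by gcongr; exact hX.le_ra hR.1 (Ls_add_negWait_mem_atomList _ _))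
  · rw [sub_le_iff_le_add]
    rcases mem_R_add.1 hz with ⟨r, hr, rfl⟩ | ⟨_, hw, rfl⟩
    · have hb := birthday_lt_of_mem_R hr
      exact (Rs_le_Ls_of_mem_R (add_mem_R_add_left (add_mem_R_add_left hr))).trans
        ((ihR r hr (hX.of_mem_R hr)).1 (by omega))
    · obtain ⟨k, rfl, rfl⟩ := mem_R_negWait.1 hw
      exact hwait (by omega)

theorem bddBelow_range_Ls_add_negWait (G : SG) :
    BddBelow (Set.range fun n => Ls (G.add (negWait n))) :=
  (G.atomList.finite_toSet.subset
    (Set.range_subset_iff.2 (Ls_add_negWait_mem_atomList G))).bddBelow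

theorem lsU_le (G : SG) (n : ℕ) : G.lsU ≤ Ls (G.add (negWait n)) :=
  ciInf_le (bddBelow_range_Ls_add_negWait G) n

theorem le_lsU {G : SG} {c : ℝ} (h : ∀ n, c ≤ Ls (G.add (negWait n))) : c ≤ G.lsU :=
  le_ciInf h

/-- If `H = ⟨∅^h | H^R⟩` is left-atomic then
`Ls(G+H) ≥ L̲s(G+H) = L̲s(G) + h`. -/
theorem leftAtomic_passAllowed (G H : SG) (hG : G.Guaranteed) (hH : H.Guaranteed)
    (hatom : H.L = []) :
    Ls (G.add H) ≥ (G.add H).lsU ∧ (G.add H).lsU = G.lsU + H.la := by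
  have hsum : (G.add H).lsU = G.lsU + H.la := by
    refine le_antisymm ?_ (le_lsU fun n => ?_)
    · rw [← sub_le_iff_le_add]
      refine le_lsU fun n => sub_le_iff_le_add.2 ?_
      exact (lsU_le _ (n + G.birthday)).trans ((stops_add_le_of_L_eq_nil hG hatom).1 le_rfl)
    · calc G.lsU + H.la ≤ Ls (G.add (negWait (n + H.birthday))) + H.la := by
            gcongr; exact lsU_le G _
        _ ≤ Ls ((G.add H).add (negWait n)) :=
            (le_stops_add_of_le_atomList hG (fun _ => hH.la_le hatom) n).1
  refine ⟨?_, hsum⟩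
  simpa only [SG.add_negWait_zero] using lsU_le (G.add H) 0

end SG
end

section
/- Domination: if G is a guaranteed scoring game with Left options A, B ∈ G^L satisfying A ≼ B, then H = ⟨G^L \ {A} | G^R⟩ is guaranteed and G ∼ H. -/
namespace SG

/-!
Removing the dominated option `A` only deletes Left's move `A + X` from each sum `G + X`. The
remaining move `B + X` gives Left a Right-stop at least as good, since `A ≼ B`, so the Left-stop
of `G + X` is unchanged; all other options of `G + X` and `H + X` correspond and have equal stops
by induction on `X`.
-/

theorem _root_.List.maximum_eq_of_subset_of_forall_exists_le {α : Type*} [LinearOrder α]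
    {l l' : List α} (hsub : l' ⊆ l) (h : ∀ x ∈ l, ∃ y ∈ l', x ≤ y) :
    l'.maximum = l.maximum :=
  le_antisymm (List.maximum_le_of_forall_le fun y hy => List.le_maximum_of_mem' (hsub hy))
    (List.maximum_le_of_forall_le fun x hx => by
      obtain ⟨y, hy, hxy⟩ := h x hx
      exact (WithBot.coe_le_coe.mpr hxy).trans (List.le_maximum_of_mem' hy))

lemma add_mk (a b a' b' : ℝ) (ls rs ls' rs' : List SG) :
    (mk a b ls rs).add (mk a' b' ls' rs') = mk (a + a') (b + b')
      (ls.map (·.add (mk a' b' ls' rs')) ++ ls'.map ((mk a b ls rs).add ·))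
      (rs.map (·.add (mk a' b' ls' rs')) ++ rs'.map ((mk a b ls rs).add ·)) := by
  rw [add]; simp

lemma Ls_mk (a b : ℝ) (ls rs : List SG) :
    Ls (mk a b ls rs) = if ls.isEmpty then a else (ls.map Rs).maximum.unbotD 0 := by
  show (stops _).1 = _
  rw [stops]; simp only [List.map_subtype, List.unattach_attach]; rfl

lemma Rs_mk (a b : ℝ) (ls rs : List SG) :
    Rs (mk a b ls rs) = if rs.isEmpty then b else (rs.map Ls).minimum.untopD 0 := by
  show (stops _).2 = _
  rw [stops]; simp only [List.map_subtype, List.unattach_attach]; rfl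

lemma atomList_mk (a b : ℝ) (ls rs : List SG) :
    (mk a b ls rs).atomList =
      (if ls.isEmpty then [a] else (ls.map atomList).flatten) ++
        (if rs.isEmpty then [b] else (rs.map atomList).flatten) := by
  rw [atomList]; simp only [List.map_subtype, List.unattach_attach]

lemma Ls_mk_eq_of_map_Rs_subset {a a' b b' : ℝ} {ls ls' rs rs' : List SG}
    (hsub : ls'.map Rs ⊆ ls.map Rs) (hne : ls' ≠ [])
    (hdom : ∀ x ∈ ls, ∃ y ∈ ls', Rs x ≤ Rs y) :
    Ls (mk a' b' ls' rs') = Ls (mk a b ls rs) := by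
  obtain ⟨x, hx⟩ := List.exists_mem_of_ne_nil ls' hne
  obtain ⟨_, hy, -⟩ := List.mem_map.mp (hsub (List.mem_map_of_mem hx))
  rw [Ls_mk, Ls_mk, if_neg (by simpa using hne), if_neg (by simpa using List.ne_nil_of_mem hy),
    List.maximum_eq_of_subset_of_forall_exists_le hsub]
  simpa using hdom

lemma Rs_mk_eq_of_map_Ls_eq {a a' b : ℝ} {ls ls' rs rs' : List SG}
    (h : rs'.map Ls = rs.map Ls) : Rs (mk a' b ls' rs') = Rs (mk a b ls rs) := by
  have hemp : rs'.isEmpty = rs.isEmpty := by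
    rw [← List.isEmpty_map (f := Ls), h, List.isEmpty_map]
  rw [Rs_mk, Rs_mk, hemp, h]

lemma atomList_mk_subset_of_subset {a b : ℝ} {ls ls' rs : List SG} (hsub : ls' ⊆ ls)
    (hne : ls' ≠ []) : (mk a b ls' rs).atomList ⊆ (mk a b ls rs).atomList := by
  have hls : ls ≠ [] := fun h => hne (List.subset_nil.mp (h ▸ hsub))
  intro s
  simp only [atomList_mk, List.isEmpty_eq_false_iff.mpr hne, List.isEmpty_eq_false_iff.mpr hls,
    Bool.false_eq_true, if_false, List.mem_append, List.mem_flatten, List.mem_map]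
  rintro (⟨_, ⟨x, hx, rfl⟩, hs⟩ | hs)
  exacts [Or.inl ⟨_, ⟨x, hsub hx, rfl⟩, hs⟩, Or.inr hs]

theorem Guaranteed.of_left_subset {a b : ℝ} {ls ls' rs : List SG}
    (hG : (mk a b ls rs).Guaranteed) (hsub : ls' ⊆ ls) (hne : ls' ≠ []) :
    (mk a b ls' rs).Guaranteed := by
  rw [Guaranteed] at hG ⊢
  obtain ⟨hL, hR, -, hRatom⟩ := hG
  exact ⟨fun x hx => hL x (hsub hx), hR, fun h => absurd h hne,
    fun h s hs => hRatom h s (atomList_mk_subset_of_subset hsub hne hs)⟩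

theorem stops_add_erase_of_ge {a b : ℝ} {ls rs : List SG} {A B : SG}
    (hB : B ∈ ls.erase A) (hdom : B.Ge A) :
    ∀ X : SG, X.Guaranteed →
      Ls ((mk a b (ls.erase A) rs).add X) = Ls ((mk a b ls rs).add X) ∧
        Rs ((mk a b (ls.erase A) rs).add X) = Rs ((mk a b ls rs).add X)
  | mk xa xb xL xR, hX => by
    have hXopts := hX
    rw [Guaranteed] at hXopts
    have ih : ∀ Y ∈ xL ++ xR,
        Ls ((mk a b (ls.erase A) rs).add Y) = Ls ((mk a b ls rs).add Y) ∧
          Rs ((mk a b (ls.erase A) rs).add Y) = Rs ((mk a b ls rs).add Y) :=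
      fun Y hY => stops_add_erase_of_ge hB hdom Y <| by
        rcases List.mem_append.mp hY with h | h
        exacts [hXopts.1 Y h, hXopts.2.1 Y h]
    rw [add_mk, add_mk]
    constructor
    · have hxL : xL.map (Rs ∘ (mk a b (ls.erase A) rs).add) = xL.map (Rs ∘ (mk a b ls rs).add) :=
        List.map_congr_left fun Y hY => (ih Y (List.mem_append_left _ hY)).2
      refine Ls_mk_eq_of_map_Rs_subset ?_
        (List.ne_nil_of_mem (List.mem_append_left _ (List.mem_map_of_mem hB))) ?_
      · simp only [List.map_append, List.map_map, hxL]
        exact List.append_subset.mpr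
          ⟨List.Subset.trans (List.map_subset _ List.erase_subset) (List.subset_append_left _ _),
            List.subset_append_right _ _⟩
      simp only [List.mem_append, List.mem_map]
      rintro _ (⟨c, hc, rfl⟩ | ⟨Y, hY, rfl⟩)
      · by_cases hcA : c = A
        · exact ⟨_, Or.inl ⟨B, hB, rfl⟩, hcA ▸ (hdom _ hX).2⟩
        · exact ⟨_, Or.inl ⟨c, (List.mem_erase_of_ne hcA).mpr hc, rfl⟩, le_rfl⟩
      · exact ⟨_, Or.inr ⟨Y, hY, rfl⟩, (ih Y (List.mem_append_left _ hY)).2.ge⟩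
    · refine Rs_mk_eq_of_map_Ls_eq ?_
      simp only [List.map_append, List.map_map]
      congr 1
      exact List.map_congr_left fun Y hY => (ih Y (List.mem_append_right _ hY)).1
termination_by X => sizeOf X
decreasing_by
  simp only [SG.mk.sizeOf_spec]
  rcases List.mem_append.mp hY with h | h <;> have := sizeOf_lt_of_mem h <;> omega

theorem domination_general (G A B : SG) (hG : G.Guaranteed) (hB : B ∈ G.L)
    (hne : B ≠ A) (hdom : B.Ge A) :
    (SG.mk G.la G.ra (G.L.erase A) G.R).Guaranteed ∧
      G.Equiv (SG.mk G.la G.ra (G.L.erase A) G.R) := by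
  obtain ⟨a, b, ls, rs⟩ := G
  have hBe : B ∈ ls.erase A := (List.mem_erase_of_ne hne).mpr hB
  have hstops := stops_add_erase_of_ge (rs := rs) (a := a) (b := b) hBe hdom
  refine ⟨hG.of_left_subset List.erase_subset (List.ne_nil_of_mem hBe), ?_, ?_⟩
  · exact fun X hX => ⟨(hstops X hX).1.le, (hstops X hX).2.le⟩
  · exact fun X hX => ⟨(hstops X hX).1.ge, (hstops X hX).2.ge⟩

/-- Domination: a dominated Left option may be removed. -/
theorem domination (G A B : SG) (hG : G.Guaranteed) (hA : A ∈ G.L) (hB : B ∈ G.L)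
    (hne : B ≠ A) (hdom : B.Ge A) :
    (SG.mk G.la G.ra (G.L.erase A) G.R).Guaranteed ∧
      G.Equiv (SG.mk G.la G.ra (G.L.erase A) G.R) :=
  domination_general G A B hG hB hne hdom

end SG
end

section
/- Monotone Principle: if G is a guaranteed scoring game with at least one Left option, then for any guaranteed game A, the game ⟨G^L ∪ {A} | G^R⟩ ≽ G. -/
namespace SG

/-! Write `G'` for `G` with the extra Left option. By induction on `X`, every Left option of
`G + X` is matched by a Left option of `G' + X` with at least its Right-stop (the same `Gᴸ + X`,
or `G' + Xᴸ` by induction), and every Right option of `G' + X` by a Right option of `G + X` with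
at most its Left-stop. Because `G` has a Left option, the Left-stops of `G + X` and `G' + X` are
maxima over nonempty option lists rather than atoms, so the matching compares them. -/

lemma _root_.List.unbotD_maximum_le_of_forall_exists_le {α : Type*} [LinearOrder α] (d : α)
    {l₁ l₂ : List α} (h₁ : l₁ ≠ []) (h : ∀ x ∈ l₁, ∃ y ∈ l₂, x ≤ y) :
    l₁.maximum.unbotD d ≤ l₂.maximum.unbotD d := by
  obtain ⟨m₁, hm₁⟩ := WithBot.ne_bot_iff_exists.1 (List.maximum_ne_bot_of_ne_nil h₁)
  obtain ⟨y, hy, hmy⟩ := h m₁ (List.maximum_mem hm₁.symm)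
  obtain ⟨m₂, hm₂⟩ :=
    WithBot.ne_bot_iff_exists.1 (List.maximum_ne_bot_of_ne_nil (List.ne_nil_of_mem hy))
  rw [← hm₁, ← hm₂, WithBot.unbotD_coe, WithBot.unbotD_coe]
  exact hmy.trans (List.le_maximum_of_mem hy hm₂.symm)

lemma _root_.List.untopD_minimum_le_of_forall_exists_le {α : Type*} [LinearOrder α] (d : α)
    {l₁ l₂ : List α} (h₂ : l₂ ≠ []) (h : ∀ y ∈ l₂, ∃ x ∈ l₁, x ≤ y) :
    l₁.minimum.untopD d ≤ l₂.minimum.untopD d := by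
  obtain ⟨m₂, hm₂⟩ := WithTop.ne_top_iff_exists.1 (List.minimum_ne_top_of_ne_nil h₂)
  obtain ⟨x, hx, hxm⟩ := h m₂ (List.minimum_mem hm₂.symm)
  obtain ⟨m₁, hm₁⟩ :=
    WithTop.ne_top_iff_exists.1 (List.minimum_ne_top_of_ne_nil (List.ne_nil_of_mem hx))
  rw [← hm₁, ← hm₂, WithTop.untopD_coe, WithTop.untopD_coe]
  exact (List.minimum_le_of_mem hx hm₁.symm).trans hxm

theorem add_mk_mk (a₁ b₁ a₂ b₂ : ℝ) (L₁ R₁ L₂ R₂ : List SG) :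
    (mk a₁ b₁ L₁ R₁).add (mk a₂ b₂ L₂ R₂) =
      mk (a₁ + a₂) (b₁ + b₂)
        (L₁.map (·.add (mk a₂ b₂ L₂ R₂)) ++ L₂.map (mk a₁ b₁ L₁ R₁).add)
        (R₁.map (·.add (mk a₂ b₂ L₂ R₂)) ++ R₂.map (mk a₁ b₁ L₁ R₁).add) := by
  rw [add]
  simp

theorem Ls_mk_of_ne_nil (a b : ℝ) {ls : List SG} (rs : List SG) (h : ls ≠ []) :
    Ls (mk a b ls rs) = (ls.map Rs).maximum.unbotD 0 := by
  rw [Ls, stops]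
  simp [h]
  rfl

theorem Rs_mk_of_ne_nil (a b : ℝ) (ls : List SG) {rs : List SG} (h : rs ≠ []) :
    Rs (mk a b ls rs) = (rs.map Ls).minimum.untopD 0 := by
  rw [Rs, stops]
  simp [h]
  rfl

theorem Rs_mk_nil (a b : ℝ) (ls : List SG) : Rs (mk a b ls []) = b := by
  rw [Rs, stops]
  simp

theorem Ls_mk_le_Ls_mk {a a' b b' : ℝ} {l l' r r' : List SG} (hl : l ≠ [])
    (h : ∀ x ∈ l, ∃ y ∈ l', Rs x ≤ Rs y) : Ls (mk a b l r) ≤ Ls (mk a' b' l' r') := by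
  obtain ⟨x, hx⟩ := List.exists_mem_of_ne_nil l hl
  obtain ⟨y, hy, -⟩ := h x hx
  rw [Ls_mk_of_ne_nil _ _ _ hl, Ls_mk_of_ne_nil _ _ _ (List.ne_nil_of_mem hy)]
  exact List.unbotD_maximum_le_of_forall_exists_le _ (by simpa using hl) (by simpa using h)

theorem Rs_mk_le_Rs_mk {a a' b b' : ℝ} {l l' r r' : List SG} (hr' : r' ≠ [])
    (h : ∀ y ∈ r', ∃ x ∈ r, Ls x ≤ Ls y) : Rs (mk a b l r) ≤ Rs (mk a' b' l' r') := by
  obtain ⟨y, hy⟩ := List.exists_mem_of_ne_nil r' hr'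
  obtain ⟨x, hx, -⟩ := h y hy
  rw [Rs_mk_of_ne_nil _ _ _ (List.ne_nil_of_mem hx), Rs_mk_of_ne_nil _ _ _ hr']
  exact List.untopD_minimum_le_of_forall_exists_le _ (by simpa using hr') (by simpa using h)

theorem stops_add_le_of_subset {a b : ℝ} {l l' r : List SG} (hl : l ≠ []) (hsub : l ⊆ l') :
    ∀ X : SG, ((mk a b l r).add X).stops ≤ ((mk a b l' r).add X).stops
  | mk c d xl xr => by
    have ihL : ∀ x ∈ xl, Rs ((mk a b l r).add x) ≤ Rs ((mk a b l' r).add x) := fun x hx =>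
      (stops_add_le_of_subset hl hsub x).2
    have ihR : ∀ x ∈ xr, Ls ((mk a b l r).add x) ≤ Ls ((mk a b l' r).add x) := fun x hx =>
      (stops_add_le_of_subset hl hsub x).1
    rw [add_mk_mk, add_mk_mk]
    constructor
    · refine Ls_mk_le_Ls_mk (by simp [hl]) ?_
      simp only [List.mem_append, List.mem_map]
      rintro _ (⟨g, hg, rfl⟩ | ⟨x, hx, rfl⟩)
      · exact ⟨_, .inl ⟨g, hsub hg, rfl⟩, le_rfl⟩
      · exact ⟨_, .inr ⟨x, hx, rfl⟩, ihL x hx⟩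
    · by_cases hnil : r = [] ∧ xr = []
      · obtain ⟨rfl, rfl⟩ := hnil
        simp only [List.map_nil, List.append_nil]
        exact (Rs_mk_nil _ _ _).trans_le (Rs_mk_nil _ _ _).ge
      refine Rs_mk_le_Rs_mk (by simpa using hnil) ?_
      simp only [List.mem_append, List.mem_map]
      rintro _ (⟨g, hg, rfl⟩ | ⟨x, hx, rfl⟩)
      · exact ⟨_, .inl ⟨g, hg, rfl⟩, le_rfl⟩
      · exact ⟨_, .inr ⟨x, hx, rfl⟩, ihR x hx⟩
termination_by X => sizeOf X
decreasing_by all_goals simp_wf; have := sizeOf_lt_of_mem hx; omega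

theorem monotone_principle_general (G A : SG)
    (hne : G.L ≠ []) : (SG.mk G.la G.ra (A :: G.L) G.R).Ge G := by
  obtain ⟨a, b, l, r⟩ := G
  intro X _
  exact stops_add_le_of_subset hne (List.subset_cons_self A l) X

/-- Monotone Principle: adding a Left option to a game with at least one Left
option cannot hurt Left. -/
theorem monotone_principle (G A : SG) (hG : G.Guaranteed) (hA : A.Guaranteed)
    (hne : G.L ≠ []) : (SG.mk G.la G.ra (A :: G.L) G.R).Ge G :=
  monotone_principle_general G A hne

end SG
end

section
/- Linking criterion: for guaranteed scoring games G and H, G is linked to H (there exists guaranteed T with Ls(G+T) < 0 < Rs(H+T)) if and only if no Left option G^L of G satisfies G^L ≽ H and no Right option H^R of H satisfies H^R ≼ G. -/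
namespace SG

/-!
If `T` links `G` to `H` and `G^L ≽ H`, then `Rs (G^L + T) ≥ Rs (H + T) > 0`, although `G^L + T` is
a Left option of `G + T`, whose Left-stop is negative; `H^R ≼ G` fails in the same way.

Conversely, a failure `G^L ⋡ H` is witnessed by a guaranteed `X` with `Ls (G^L + X) < Ls (H + X)`
or `Rs (G^L + X) < Rs (H + X)`. Adding a number to `X` moves the gap across `0`, and a Right-stop
gap is turned into a Left-stop gap by `⟨X | -c⟩` with `c` large. So every `G^L` has an `X` with
`Ls (G^L + X) < 0 < Ls (H + X)`, and dually every `H^R` a `Y` with `Rs (G + Y) < 0 < Rs (H^R + Y)`.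
The game `T = ⟨Ys | Xs⟩` then links `G` to `H`, once its atoms are pushed far enough out to keep
it guaranteed and to make the cases without options harmless.
-/

theorem _root_.List.exists_forall_mem_of_forall_mem_exists {α β : Type*} {l : List α}
    {p : α → β → Prop} {q : β → Prop} (h : ∀ a ∈ l, ∃ b, q b ∧ p a b) :
    ∃ l' : List β, (∀ b ∈ l', q b) ∧ ∀ a ∈ l, ∃ b ∈ l', p a b := by
  induction l with
  | nil => exact ⟨[], by simp, by simp⟩
  | cons a t ih =>
    obtain ⟨b, hqb, hpb⟩ := h a List.mem_cons_self
    obtain ⟨l', hq, hp⟩ := ih fun a ha => h a (List.mem_cons_of_mem _ ha)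
    refine ⟨b :: l', List.forall_mem_cons.2 ⟨hqb, hq⟩, List.forall_mem_cons.2 ⟨?_, ?_⟩⟩
    · exact ⟨b, List.mem_cons_self, hpb⟩
    · intro a ha
      obtain ⟨c, hc, hpc⟩ := hp a ha
      exact ⟨c, List.mem_cons_of_mem _ hc, hpc⟩

theorem induction {motive : SG → Prop}
    (step : ∀ G, (∀ x ∈ G.L, motive x) → (∀ x ∈ G.R, motive x) → motive G) (G : SG) :
    motive G :=
  match G with
  | mk _ _ ls rs =>
    step _ (fun x (_ : x ∈ ls) => induction step x) (fun x (_ : x ∈ rs) => induction step x)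
decreasing_by all_goals (simp only [SG.mk.sizeOf_spec]; have := sizeOf_lt_of_mem ‹_›; omega)

theorem ext {G H : SG} (hla : G.la = H.la) (hra : G.ra = H.ra) (hL : G.L = H.L)
    (hR : G.R = H.R) : G = H := by
  cases G; cases H; simp_all only [la, ra, L, R]

@[simp] theorem la_mk (a b : ℝ) (ls rs : List SG) : (mk a b ls rs).la = a := rfl
@[simp] theorem ra_mk (a b : ℝ) (ls rs : List SG) : (mk a b ls rs).ra = b := rfl
@[simp] theorem L_mk (a b : ℝ) (ls rs : List SG) : (mk a b ls rs).L = ls := rfl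
@[simp] theorem R_mk (a b : ℝ) (ls rs : List SG) : (mk a b ls rs).R = rs := rfl

@[simp] theorem la_num (c : ℝ) : (num c).la = c := rfl
@[simp] theorem ra_num (c : ℝ) : (num c).ra = c := rfl
@[simp] theorem L_num (c : ℝ) : (num c).L = [] := rfl
@[simp] theorem R_num (c : ℝ) : (num c).R = [] := rfl

theorem add_mem_L_add_left_s16 {G H g : SG} (h : g ∈ G.L) : g.add H ∈ (G.add H).L := by
  simp only [L_add, List.mem_append, List.mem_map]; exact .inl ⟨g, h, rfl⟩

theorem add_mem_L_add_right_s16 {G H h : SG} (hh : h ∈ H.L) : G.add h ∈ (G.add H).L := by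
  simp only [L_add, List.mem_append, List.mem_map]; exact .inr ⟨h, hh, rfl⟩

theorem add_mem_R_add_left_s16 {G H g : SG} (h : g ∈ G.R) : g.add H ∈ (G.add H).R := by
  simp only [R_add, List.mem_append, List.mem_map]; exact .inl ⟨g, h, rfl⟩

theorem add_mem_R_add_right {G H h : SG} (hh : h ∈ H.R) : G.add h ∈ (G.add H).R := by
  simp only [R_add, List.mem_append, List.mem_map]; exact .inr ⟨h, hh, rfl⟩

theorem Ls_of_L_eq_nil_s16 {G : SG} (h : G.L = []) : Ls G = G.la := by
  cases G
  subst h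
  simp [Ls, stops, la]

theorem Rs_of_R_eq_nil_s16 {G : SG} (h : G.R = []) : Rs G = G.ra := by
  cases G
  subst h
  simp [Rs, stops, ra]

theorem isGreatest_Ls {G : SG} (h : G.L ≠ []) : IsGreatest (Rs '' {x | x ∈ G.L}) (Ls G) := by
  cases G with | mk a b ls rs =>
  change ls ≠ [] at h
  obtain ⟨m, hm⟩ := WithBot.ne_bot_iff_exists.1
    (List.maximum_ne_bot_of_ne_nil (l := ls.map Rs) (by simpa using h))
  have hLs : Ls (mk a b ls rs) = m := by
    have hm' : ((ls.map fun x => x.stops.2).maximum) = m := hm.symm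
    simp [Ls, stops, h, hm']
  rw [hLs]
  refine ⟨?_, ?_⟩
  · simpa [L] using List.maximum_mem hm.symm
  · rintro _ ⟨x, hx, rfl⟩
    exact List.le_maximum_of_mem (List.mem_map_of_mem hx) hm.symm

theorem isLeast_Rs {G : SG} (h : G.R ≠ []) : IsLeast (Ls '' {x | x ∈ G.R}) (Rs G) := by
  cases G with | mk a b ls rs =>
  change rs ≠ [] at h
  obtain ⟨m, hm⟩ := WithTop.ne_top_iff_exists.1
    (List.minimum_ne_top_of_ne_nil (l := rs.map Ls) (by simpa using h))
  have hRs : Rs (mk a b ls rs) = m := by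
    have hm' : ((rs.map fun x => x.stops.1).minimum) = m := hm.symm
    simp [Rs, stops, h, hm']
  rw [hRs]
  refine ⟨?_, ?_⟩
  · simpa [R] using List.minimum_mem hm.symm
  · rintro _ ⟨x, hx, rfl⟩
    exact List.minimum_le_of_mem (List.mem_map_of_mem hx) hm.symm

theorem Rs_le_Ls_of_mem_L_s16 {G x : SG} (h : x ∈ G.L) : Rs x ≤ Ls G :=
  (isGreatest_Ls (List.ne_nil_of_mem h)).2 ⟨x, h, rfl⟩

theorem Rs_le_Ls_of_mem_R_s16 {G x : SG} (h : x ∈ G.R) : Rs G ≤ Ls x :=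
  (isLeast_Rs (List.ne_nil_of_mem h)).2 ⟨x, h, rfl⟩

theorem Ls_lt_iff {G : SG} {t : ℝ} :
    Ls G < t ↔ (G.L = [] → G.la < t) ∧ ∀ x ∈ G.L, Rs x < t := by
  rcases eq_or_ne G.L [] with h | h
  · simp [Ls_of_L_eq_nil_s16 h, h]
  · simp [(isGreatest_Ls h).lt_iff, h]

theorem lt_Rs_iff {G : SG} {t : ℝ} :
    t < Rs G ↔ (G.R = [] → t < G.ra) ∧ ∀ x ∈ G.R, t < Ls x := by
  rcases eq_or_ne G.R [] with h | h
  · simp [Rs_of_R_eq_nil_s16 h, h]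
  · simp [(isLeast_Rs h).lt_iff, h]

theorem stops_add_num (P : SG) (c : ℝ) :
    Ls (P.add (num c)) = Ls P + c ∧ Rs (P.add (num c)) = Rs P + c := by
  induction P using SG.induction with | step P ihL ihR =>
  constructor
  · refine eq_of_forall_gt_iff fun t => ?_
    rw [← lt_sub_iff_add_lt, Ls_lt_iff, Ls_lt_iff]
    simp only [L_add, L_num, List.map_nil, List.append_nil, List.map_eq_nil_iff, la_add,
      la_num, List.forall_mem_map, lt_sub_iff_add_lt]
    exact and_congr Iff.rfl (forall₂_congr fun g hg => by rw [(ihL g hg).2])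
  · refine eq_of_forall_lt_iff fun t => ?_
    rw [← sub_lt_iff_lt_add, lt_Rs_iff, lt_Rs_iff]
    simp only [R_add, R_num, List.map_nil, List.append_nil, List.map_eq_nil_iff, ra_add,
      ra_num, List.forall_mem_map, sub_lt_iff_lt_add]
    exact and_congr Iff.rfl (forall₂_congr fun g hg => by rw [(ihR g hg).1])

theorem Ls_add_num (P : SG) (c : ℝ) : Ls (P.add (num c)) = Ls P + c := (stops_add_num P c).1

theorem Rs_add_num (P : SG) (c : ℝ) : Rs (P.add (num c)) = Rs P + c := (stops_add_num P c).2

theorem mem_atomList {G : SG} {s : ℝ} :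
    s ∈ G.atomList ↔ (G.L = [] ∧ s = G.la) ∨ (∃ x ∈ G.L, s ∈ x.atomList) ∨
      (G.R = [] ∧ s = G.ra) ∨ ∃ x ∈ G.R, s ∈ x.atomList := by
  cases G with | mk a b ls rs =>
  rw [atomList]
  rcases eq_or_ne ls [] with rfl | hls <;> rcases eq_or_ne rs [] with rfl | hrs <;>
    simp [*, la, ra, L, R, List.attach_map_val (f := atomList)]

theorem exists_add_of_mem_atomList_add {G H : SG} {s : ℝ} (hs : s ∈ (G.add H).atomList) :
    ∃ u ∈ G.atomList, ∃ v ∈ H.atomList, s = u + v := by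
  induction G using SG.induction generalizing H s with | step G ihGL ihGR =>
  induction H using SG.induction generalizing s with | step H ihHL ihHR =>
  rw [mem_atomList] at hs
  simp only [L_add, R_add, la_add, ra_add, List.append_eq_nil_iff,
    List.map_eq_nil_iff, List.mem_append, List.mem_map] at hs
  rcases hs with ⟨⟨hG, hH⟩, rfl⟩ | ⟨_, ⟨g, hg, rfl⟩ | ⟨h, hh, rfl⟩, hs⟩ |
      ⟨⟨hG, hH⟩, rfl⟩ | ⟨_, ⟨g, hg, rfl⟩ | ⟨h, hh, rfl⟩, hs⟩
  · exact ⟨_, mem_atomList.2 (.inl ⟨hG, rfl⟩), _, mem_atomList.2 (.inl ⟨hH, rfl⟩), rfl⟩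
  · obtain ⟨u, hu, v, hv, rfl⟩ := ihGL g hg hs
    exact ⟨u, mem_atomList.2 (.inr (.inl ⟨g, hg, hu⟩)), v, hv, rfl⟩
  · obtain ⟨u, hu, v, hv, rfl⟩ := ihHL h hh hs
    exact ⟨u, hu, v, mem_atomList.2 (.inr (.inl ⟨h, hh, hv⟩)), rfl⟩
  · exact ⟨_, mem_atomList.2 (.inr (.inr (.inl ⟨hG, rfl⟩))),
      _, mem_atomList.2 (.inr (.inr (.inl ⟨hH, rfl⟩))), rfl⟩
  · obtain ⟨u, hu, v, hv, rfl⟩ := ihGR g hg hs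
    exact ⟨u, mem_atomList.2 (.inr (.inr (.inr ⟨g, hg, hu⟩))), v, hv, rfl⟩
  · obtain ⟨u, hu, v, hv, rfl⟩ := ihHR h hh hs
    exact ⟨u, hu, v, mem_atomList.2 (.inr (.inr (.inr ⟨h, hh, hv⟩))), rfl⟩

theorem guaranteed_num (c : ℝ) : (num c).Guaranteed := by
  rw [guaranteed_iff]
  simp [num, atomList, la, ra, L, R]

theorem exists_guaranteed_mk {ls rs : List SG} (hls : ∀ x ∈ ls, x.Guaranteed)
    (hrs : ∀ x ∈ rs, x.Guaranteed) (a₀ b₀ : ℝ) :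
    ∃ a ≤ a₀, ∃ b ≥ b₀, (mk a b ls rs).Guaranteed := by
  set S := (ls ++ rs).flatMap atomList
  obtain ⟨m, hm⟩ := S.finite_toSet.bddBelow
  obtain ⟨M, hM⟩ := S.finite_toSet.bddAbove
  set b := max b₀ M
  set a := min a₀ (min m b)
  have hab : a ≤ b := (min_le_right _ _).trans (min_le_right _ _)
  have ham : a ≤ m := (min_le_right _ _).trans (min_le_left _ _)
  have hMb : M ≤ b := le_max_right _ _
  have hatoms : ∀ s ∈ (mk a b ls rs).atomList, a ≤ s ∧ s ≤ b := by
    intro s hs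
    have hS : ∀ x ∈ ls ++ rs, s ∈ x.atomList → a ≤ s ∧ s ≤ b := fun x hx hsx =>
      ⟨ham.trans (hm (List.mem_flatMap.2 ⟨x, hx, hsx⟩)),
        (hM (List.mem_flatMap.2 ⟨x, hx, hsx⟩)).trans hMb⟩
    rcases mem_atomList.1 hs with ⟨-, rfl⟩ | ⟨x, hx, hsx⟩ | ⟨-, rfl⟩ | ⟨x, hx, hsx⟩
    · exact ⟨le_rfl, hab⟩
    · exact hS x (List.mem_append_left _ hx) hsx
    · exact ⟨hab, le_rfl⟩
    · exact hS x (List.mem_append_right _ hx) hsx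
  exact ⟨a, min_le_left _ _, b, le_max_left _ _, (guaranteed_iff _).2
    ⟨hls, hrs, fun _ s hs => (hatoms s hs).1, fun _ s hs => (hatoms s hs).2⟩⟩

theorem Ls_add_add_num (A X : SG) (c : ℝ) : Ls (A.add (X.add (num c))) = Ls (A.add X) + c := by
  rw [← add_assoc, Ls_add_num]

theorem Rs_add_add_num (A X : SG) (c : ℝ) : Rs (A.add (X.add (num c))) = Rs (A.add X) + c := by
  rw [← add_assoc, Rs_add_num]

theorem exists_lt_of_not_ge {A B : SG} (h : ¬ A.Ge B) :
    ∃ X, X.Guaranteed ∧ (Ls (A.add X) < Ls (B.add X) ∨ Rs (A.add X) < Rs (B.add X)) := by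
  simpa only [Ge, not_forall, not_and_or, not_le, exists_prop, ge_iff_le] using h

theorem exists_Ls_neg_pos_of_Ls_lt {A B X : SG} (hX : X.Guaranteed)
    (h : Ls (A.add X) < Ls (B.add X)) :
    ∃ X', X'.Guaranteed ∧ Ls (A.add X') < 0 ∧ 0 < Ls (B.add X') :=
  ⟨X.add (num (-(Ls (A.add X) + Ls (B.add X)) / 2)), hX.add (guaranteed_num _),
    by rw [Ls_add_add_num]; linarith, by rw [Ls_add_add_num]; linarith⟩

theorem exists_Rs_neg_pos_of_Rs_lt {A B X : SG} (hX : X.Guaranteed)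
    (h : Rs (A.add X) < Rs (B.add X)) :
    ∃ X', X'.Guaranteed ∧ Rs (A.add X') < 0 ∧ 0 < Rs (B.add X') :=
  ⟨X.add (num (-(Rs (A.add X) + Rs (B.add X)) / 2)), hX.add (guaranteed_num _),
    by rw [Rs_add_add_num]; linarith, by rw [Rs_add_add_num]; linarith⟩

theorem exists_Ls_neg_pos_of_Rs_neg_pos {A B W : SG} (hW : W.Guaranteed)
    (hA : Rs (A.add W) < 0) (hB : 0 < Rs (B.add W)) :
    ∃ X, X.Guaranteed ∧ Ls (A.add X) < 0 ∧ 0 < Ls (B.add X) := by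
  -- `U` bounds the Left-stops of Left's options in `A`, so after any of them Right's reply
  -- `num (-U - 1)` makes the Left-stop negative.
  obtain ⟨U, hU⟩ := (A.L.map Ls).finite_toSet.bddAbove
  obtain ⟨a, -, b, -, hX⟩ := exists_guaranteed_mk (ls := [W]) (rs := [num (-U - 1)])
    (by simpa using hW) (by simpa using guaranteed_num _) 0 0
  refine ⟨_, hX, Ls_lt_iff.2 ⟨by simp, ?_⟩, hB.trans_le (Rs_le_Ls_of_mem_L_s16 (by simp))⟩
  simp only [L_add, L_mk, List.forall_mem_append, List.forall_mem_map, List.forall_mem_singleton]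
  refine ⟨fun g hg => ?_, hA⟩
  calc Rs (g.add (mk a b [W] [num (-U - 1)])) ≤ Ls (g.add (num (-U - 1))) :=
        Rs_le_Ls_of_mem_R_s16 (by simp)
    _ = Ls g - U - 1 := by rw [Ls_add_num]; ring
    _ < 0 := by linarith [hU (List.mem_map_of_mem (f := Ls) hg)]

theorem exists_Rs_neg_pos_of_Ls_neg_pos {A B W : SG} (hW : W.Guaranteed)
    (hA : Ls (A.add W) < 0) (hB : 0 < Ls (B.add W)) :
    ∃ Y, Y.Guaranteed ∧ Rs (A.add Y) < 0 ∧ 0 < Rs (B.add Y) := by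
  obtain ⟨V, hV⟩ := (B.R.map Rs).finite_toSet.bddBelow
  obtain ⟨a, -, b, -, hY⟩ := exists_guaranteed_mk (ls := [num (1 - V)]) (rs := [W])
    (by simpa using guaranteed_num _) (by simpa using hW) 0 0
  refine ⟨_, hY, (Rs_le_Ls_of_mem_R_s16 (by simp)).trans_lt hA, lt_Rs_iff.2 ⟨by simp, ?_⟩⟩
  simp only [R_add, R_mk, List.forall_mem_append, List.forall_mem_map, List.forall_mem_singleton]
  refine ⟨fun h hh => ?_, hB⟩
  calc 0 < Rs h + 1 - V := by linarith [hV (List.mem_map_of_mem (f := Rs) hh)]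
    _ = Rs (h.add (num (1 - V))) := by rw [Rs_add_num]; ring
    _ ≤ Ls (h.add (mk a b [num (1 - V)] [W])) := Rs_le_Ls_of_mem_L_s16 (by simp)

theorem exists_Ls_neg_pos_of_not_ge {A B : SG} (h : ¬ A.Ge B) :
    ∃ X, X.Guaranteed ∧ Ls (A.add X) < 0 ∧ 0 < Ls (B.add X) := by
  obtain ⟨X, hX, hlt | hlt⟩ := exists_lt_of_not_ge h
  · exact exists_Ls_neg_pos_of_Ls_lt hX hlt
  · obtain ⟨W, hW, hA, hB⟩ := exists_Rs_neg_pos_of_Rs_lt hX hlt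
    exact exists_Ls_neg_pos_of_Rs_neg_pos hW hA hB

theorem exists_Rs_neg_pos_of_not_ge {A B : SG} (h : ¬ A.Ge B) :
    ∃ Y, Y.Guaranteed ∧ Rs (A.add Y) < 0 ∧ 0 < Rs (B.add Y) := by
  obtain ⟨X, hX, hlt | hlt⟩ := exists_lt_of_not_ge h
  · obtain ⟨W, hW, hA, hB⟩ := exists_Ls_neg_pos_of_Ls_lt hX hlt
    exact exists_Rs_neg_pos_of_Ls_neg_pos hW hA hB
  · exact exists_Rs_neg_pos_of_Rs_lt hX hlt

theorem Linked.not_ge_of_mem_L {G H Gl : SG} (h : Linked G H) (hGl : Gl ∈ G.L) :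
    ¬ Gl.Ge H := fun hge => by
  obtain ⟨T, hT, hG, hH⟩ := h
  have := (hge T hT).2
  have := Rs_le_Ls_of_mem_L_s16 (add_mem_L_add_left_s16 (H := T) hGl)
  linarith

theorem Linked.not_ge_of_mem_R {G H Hr : SG} (h : Linked G H) (hHr : Hr ∈ H.R) :
    ¬ G.Ge Hr := fun hge => by
  obtain ⟨T, hT, hG, hH⟩ := h
  have := (hge T hT).1
  have := Rs_le_Ls_of_mem_R_s16 (add_mem_R_add_left_s16 (H := T) hHr)
  linarith

theorem linked_of_options {G H : SG} {Ys Xs : List SG}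
    (hYs : ∀ Y ∈ Ys, Y.Guaranteed ∧ Rs (G.add Y) < 0)
    (hXs : ∀ X ∈ Xs, X.Guaranteed ∧ 0 < Ls (H.add X))
    (hGL : ∀ Gl ∈ G.L, ∃ X ∈ Xs, Ls (Gl.add X) < 0)
    (hHR : ∀ Hr ∈ H.R, ∃ Y ∈ Ys, 0 < Rs (Hr.add Y)) :
    Linked G H := by
  obtain ⟨a, ha, b, hb, hT⟩ := exists_guaranteed_mk (fun Y hY => (hYs Y hY).1)
    (fun X hX => (hXs X hX).1) (-G.la - 1) (1 - H.ra)
  refine ⟨_, hT, Ls_lt_iff.2 ⟨fun _ => by simp; linarith, ?_⟩,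
    lt_Rs_iff.2 ⟨fun _ => by simp; linarith, ?_⟩⟩
  · simp only [L_add, L_mk, List.forall_mem_append, List.forall_mem_map]
    refine ⟨fun Gl hGl => ?_, fun Y hY => (hYs Y hY).2⟩
    obtain ⟨X, hX, hlt⟩ := hGL Gl hGl
    exact (Rs_le_Ls_of_mem_R_s16 (add_mem_R_add_right hX)).trans_lt hlt
  · simp only [R_add, R_mk, List.forall_mem_append, List.forall_mem_map]
    refine ⟨fun Hr hHr => ?_, fun X hX => (hXs X hX).2⟩
    obtain ⟨Y, hY, hlt⟩ := hHR Hr hHr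
    exact hlt.trans_le (Rs_le_Ls_of_mem_L_s16 (add_mem_L_add_right_s16 hY))

theorem linked_iff_general (G H : SG) :
    Linked G H ↔
      (∀ Gl ∈ G.L, ¬ Gl.Ge H) ∧ (∀ Hr ∈ H.R, ¬ G.Ge Hr) := by
  refine ⟨fun h => ⟨fun _ => h.not_ge_of_mem_L, fun _ => h.not_ge_of_mem_R⟩, fun ⟨hL, hR⟩ => ?_⟩
  obtain ⟨Xs, hXs, hGL⟩ := List.exists_forall_mem_of_forall_mem_exists (l := G.L)
    (q := fun X => X.Guaranteed ∧ 0 < Ls (H.add X)) (p := fun Gl X => Ls (Gl.add X) < 0)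
    fun Gl hGl => by
      obtain ⟨X, hX, hGlX, hHX⟩ := exists_Ls_neg_pos_of_not_ge (hL Gl hGl)
      exact ⟨X, ⟨hX, hHX⟩, hGlX⟩
  obtain ⟨Ys, hYs, hHR⟩ := List.exists_forall_mem_of_forall_mem_exists (l := H.R)
    (q := fun Y => Y.Guaranteed ∧ Rs (G.add Y) < 0) (p := fun Hr Y => 0 < Rs (Hr.add Y))
    fun Hr hHr => by
      obtain ⟨Y, hY, hGY, hHrY⟩ := exists_Rs_neg_pos_of_not_ge (hR Hr hHr)
      exact ⟨Y, ⟨hY, hGY⟩, hHrY⟩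
  exact linked_of_options hYs hXs hGL hHR

/-- Linking criterion: `G` is linked to `H` iff no `G^L ≽ H` and no
`H^R ≼ G`. -/
theorem linked_iff (G H : SG) (hG : G.Guaranteed) (hH : H.Guaranteed) :
    Linked G H ↔
      (∀ Gl ∈ G.L, ¬ Gl.Ge H) ∧ (∀ Hr ∈ H.R, ¬ G.Ge Hr) :=
  linked_iff_general G H

end SG
end
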